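/- For all x, y, L > 0, one has D(L, x, y)/L < H(x+y, L), where D(L,x,y) := 2·log((e^{L/2} + e^{(x+y)/2})/(e^{-L/2} + e^{(x+y)/2})) and H(u,v) := 1/(1 + e^{(u+v)/2}) + 1/(1 + e^{(u-v)/2}). -/

import Mathlib

noncomputable def D (x y z : ℝ) : ℝ :=
  2 * Real.log ((Real.exp (x/2) + Real.exp ((y+z)/2)) / (Real.exp (-x/2) + Real.exp ((y+z)/2)))

noncomputable def H (u v : ℝ) : ℝ :=
  1 / (1 + Real.exp ((u+v)/2)) + 1 / (1 + Real.exp ((u-v)/2))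

/-! With `s = x + y`, the function `f t = t * H s t - D t x y` vanishes at `0`, and since
`∂D/∂t = H s t` its derivative is `t * ∂H/∂t (s, t)`. This is positive for `t > 0` because
`exp a / (1 + exp a) ^ 2 = 1 / (4 cosh² (a / 2))` is smaller at `a = (s + t) / 2` than at
`a = (s - t) / 2`. Hence `f L > f 0 = 0`. -/

open Real Set

lemma hasDerivAt_one_div_one_add_exp (t : ℝ) :
    HasDerivAt (fun t => 1 / (1 + exp t)) (-(exp t / (1 + exp t) ^ 2)) t := by
  simpa only [one_div, neg_div] using ((hasDerivAt_exp t).const_add 1).fun_inv (by positivity)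

lemma exp_div_one_add_exp_sq_lt {a b : ℝ} (hba : b < a) (hab : 0 < a + b) :
    exp a / (1 + exp a) ^ 2 < exp b / (1 + exp b) ^ 2 := by
  rw [div_lt_div_iff₀ (by positivity) (by positivity)]
  have hexp : exp b < exp a := exp_lt_exp.2 hba
  have hprod : 1 < exp a * exp b := by rw [← exp_add]; exact one_lt_exp_iff.2 hab
  nlinarith [mul_pos (sub_pos.2 hexp) (sub_pos.2 hprod)]

lemma hasDerivAt_H (s u : ℝ) :
    HasDerivAt (H s) ((exp ((s - u) / 2) / (1 + exp ((s - u) / 2)) ^ 2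
      - exp ((s + u) / 2) / (1 + exp ((s + u) / 2)) ^ 2) / 2) u := by
  have hplus : HasDerivAt (fun u => (s + u) / 2) (1 / 2) u := by
    simpa using ((hasDerivAt_id u).const_add s).div_const 2
  have hminus : HasDerivAt (fun u => (s - u) / 2) (-1 / 2) u := by
    simpa using ((hasDerivAt_id u).const_sub s).div_const 2
  exact (((hasDerivAt_one_div_one_add_exp _).comp u hplus).add
    ((hasDerivAt_one_div_one_add_exp _).comp u hminus)).congr_deriv (by ring)

lemma hasDerivAt_D (y z t : ℝ) : HasDerivAt (fun t => D t y z) (H (y + z) t) t := by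
  set s := y + z
  have hpos : ∀ t, 0 < exp t + exp (s / 2) := fun t => by positivity
  have hD : (fun t => D t y z) =
      fun t => 2 * (log (exp (t / 2) + exp (s / 2)) - log (exp (-t / 2) + exp (s / 2))) := by
    funext t
    rw [D, log_div (hpos _).ne' (hpos _).ne']
  have hP : HasDerivAt (fun t => exp (t / 2) + exp (s / 2)) (exp (t / 2) * (1 / 2)) t :=
    (((hasDerivAt_id t).div_const 2).exp).add_const _
  have hQ : HasDerivAt (fun t => exp (-t / 2) + exp (s / 2)) (exp (-t / 2) * (-1 / 2)) t := by
    have : HasDerivAt (fun t : ℝ => -t / 2) (-1 / 2) t := by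
      simpa using (hasDerivAt_id t).neg.div_const 2
    exact this.exp.add_const _
  have e1 : exp (t / 2) + exp (s / 2) = exp (t / 2) * (1 + exp ((s - t) / 2)) := by
    rw [mul_add, mul_one, ← exp_add]; ring_nf
  have e2 : exp (-t / 2) + exp (s / 2) = exp (-t / 2) * (1 + exp ((s + t) / 2)) := by
    rw [mul_add, mul_one, ← exp_add]; ring_nf
  rw [hD]
  refine (((hP.log (hpos _).ne').sub (hQ.log (hpos _).ne')).const_mul 2).congr_deriv ?_
  rw [H, e1, e2]
  field_simp
  ring

lemma D_zero (y z : ℝ) : D 0 y z = 0 := by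
  simp [D]

lemma strictMonoOn_mul_H_sub_D {y z : ℝ} (hyz : 0 < y + z) :
    StrictMonoOn (fun t => t * H (y + z) t - D t y z) (Ici 0) := by
  have hderiv : ∀ t, HasDerivAt (fun t => t * H (y + z) t - D t y z)
      (t * ((exp ((y + z - t) / 2) / (1 + exp ((y + z - t) / 2)) ^ 2
        - exp ((y + z + t) / 2) / (1 + exp ((y + z + t) / 2)) ^ 2) / 2)) t := fun t =>
    (((hasDerivAt_id t).mul (hasDerivAt_H _ t)).sub (hasDerivAt_D y z t)).congr_deriv (by
      simp only [id_eq]; ring)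
  refine strictMonoOn_of_hasDerivWithinAt_pos (convex_Ici 0)
    (HasDerivAt.continuousOn fun t _ => hderiv t) (fun t _ => (hderiv t).hasDerivWithinAt) ?_
  intro t ht
  rw [interior_Ici, mem_Ioi] at ht
  have hslope := exp_div_one_add_exp_sq_lt (a := (y + z + t) / 2) (b := (y + z - t) / 2)
    (by linarith) (by linarith)
  exact mul_pos ht (div_pos (sub_pos.2 hslope) two_pos)

theorem stmt9 (x y L : ℝ) (hx : 0 < x) (hy : 0 < y) (hL : 0 < L) :
    D L x y / L < H (x+y) L := by
  have h := strictMonoOn_mul_H_sub_D (add_pos hx hy) self_mem_Ici hL.le hL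
  simp only [zero_mul, D_zero, sub_zero] at h
  rw [div_lt_iff₀ hL]
  linarith
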